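/- arXiv:2402.00690 — 4 statements merged into one kernel-verified Lean document; each statement's English description precedes it below -/
import Mathlib

section
/- For 2 - √3 ≤ α < 1/3, the function g(θ) = ((1-2α)θ - 1)/(αθ(θ-1)) is strictly increasing on the interval [1/(1-2α), 1/α], and its maximum value on this interval is (1-3α)/(1-α), attained at θ = 1/α. -/
/-! For `x < y` the cross-multiplied difference `g y - g x` factors as `(y - x) (x + y - 1 - r x y)`
up to positive factors. The bilinear factor is positive on `[1/r, b]` as long as `b` lies below the
larger root of `r θ² - 2 θ + 1`; for `r = 1 - 2α` and `b = 1/α` this is exactly `α² - 4α + 1 ≤ 0`,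
i.e. `α ≥ 2 - √3`. The maximum is then the value at the right endpoint. -/

open Set

lemma add_sub_one_sub_mul_pos {r x y : ℝ} (hr : 0 < r) (hx : 1 ≤ r * x) (hxy : x < y)
    (hy : r * y ^ 2 - 2 * y + 1 ≤ 0) : 0 < x + y - 1 - r * x * y := by
  have hry : 1 < r * y := hx.trans_lt (mul_lt_mul_of_pos_left hxy hr)
  -- the factor is decreasing in `x` and equals `-(r y² - 2 y + 1)` at `x = y`
  nlinarith [mul_pos (sub_pos.2 hxy) (sub_pos.2 hry)]

lemma strictMonoOn_div_mul_sub_one {r c b : ℝ} (hc : 0 < c) (hr0 : 0 < r) (hr1 : r < 1)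
    (hb : r * b ^ 2 - 2 * b + 1 ≤ 0) :
    StrictMonoOn (fun θ : ℝ => (r * θ - 1) / (c * θ * (θ - 1))) (Icc (1 / r) b) := by
  intro x hx y hy hxy
  have hrx : 1 ≤ r * x := by rw [mul_comm]; exact (div_le_iff₀ hr0).1 hx.1
  have hx1 : 1 < x := by nlinarith
  have hy1 : 1 < y := hx1.trans hxy
  -- the factor `x + y - 1 - r x y` is non-increasing in `y` since `r x ≥ 1`
  have hQ : 0 < x + y - 1 - r * x * y := by
    have hxb := add_sub_one_sub_mul_pos hr0 hrx (hxy.trans_le hy.2) hb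
    nlinarith [mul_nonneg (sub_nonneg.2 hy.2) (sub_nonneg.2 hrx)]
  have hdx : 0 < c * x * (x - 1) := by have := sub_pos.2 hx1; positivity
  have hdy : 0 < c * y * (y - 1) := by have := sub_pos.2 hy1; positivity
  show (r * x - 1) / (c * x * (x - 1)) < (r * y - 1) / (c * y * (y - 1))
  rw [div_lt_div_iff₀ hdx hdy]
  have key : (r * y - 1) * (c * x * (x - 1)) - (r * x - 1) * (c * y * (y - 1))
      = c * (y - x) * (x + y - 1 - r * x * y) := by ring
  linarith [mul_pos (mul_pos hc (sub_pos.2 hxy)) hQ]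

/-- For `2 - √3 ≤ α < 1/3`, the function `g(θ) = ((1-2α)θ - 1)/(αθ(θ-1))` is
strictly increasing on `[1/(1-2α), 1/α]`, and its maximum value on this interval
is `(1-3α)/(1-α)`, attained at `θ = 1/α`. -/
theorem stmt_5 (α : ℝ) (h0 : 2 - Real.sqrt 3 ≤ α) (h1 : α < 1 / 3) :
    StrictMonoOn (fun θ : ℝ => ((1 - 2 * α) * θ - 1) / (α * θ * (θ - 1)))
      (Set.Icc (1 / (1 - 2 * α)) (1 / α)) ∧
    ((1 - 2 * α) * (1 / α) - 1) / (α * (1 / α) * (1 / α - 1)) = (1 - 3 * α) / (1 - α) ∧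
    ∀ θ ∈ Set.Icc (1 / (1 - 2 * α)) (1 / α),
      ((1 - 2 * α) * θ - 1) / (α * θ * (θ - 1)) ≤ (1 - 3 * α) / (1 - α) := by
  have hsqrt3 : Real.sqrt 3 < 2 := by
    rw [Real.sqrt_lt' two_pos]; norm_num
  have hα : 0 < α := by linarith
  have hquad : α ^ 2 - 4 * α + 1 ≤ 0 := by
    nlinarith [Real.sq_sqrt (show (0 : ℝ) ≤ 3 by norm_num)]
  have hb : (1 - 2 * α) * (1 / α) ^ 2 - 2 * (1 / α) + 1 ≤ 0 := by
    have : (1 - 2 * α) * (1 / α) ^ 2 - 2 * (1 / α) + 1 = (α ^ 2 - 4 * α + 1) / α ^ 2 := by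
      field_simp; ring
    rw [this]; exact div_nonpos_of_nonpos_of_nonneg hquad (sq_nonneg α)
  have hmono := strictMonoOn_div_mul_sub_one hα (by linarith) (by linarith) hb
  have hval : ((1 - 2 * α) * (1 / α) - 1) / (α * (1 / α) * (1 / α - 1))
      = (1 - 3 * α) / (1 - α) := by
    have : 1 - α ≠ 0 := by linarith
    field_simp; ring
  have hmem : 1 / α ∈ Icc (1 / (1 - 2 * α)) (1 / α) :=
    ⟨one_div_le_one_div_of_le hα (by linarith), le_rfl⟩
  exact ⟨hmono, hval, fun θ hθ => hval ▸ hmono.monotoneOn hθ hmem hθ.2⟩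
end

section
/- For 0 < α ≤ 1/3, the supremum of the function θ ↦ ((1-α)θ - 1)/((1 + αθ)(θ - 1)) over θ ∈ [1/(1-2α), 1/α] is attained at θ = 2/(1-α) and equals ((1-α)/(1+α))². -/
/-- For `0 < α ≤ 1/3`, the supremum of `θ ↦ ((1-α)θ - 1)/((1+αθ)(θ-1))` over
`θ ∈ [1/(1-2α), 1/α]` equals `((1-α)/(1+α))²`, attained at `θ = 2/(1-α)`. -/
theorem stmt_7 (α : ℝ) (h0 : 0 < α) (h1 : α ≤ 1 / 3) :
    2 / (1 - α) ∈ Set.Icc (1 / (1 - 2 * α)) (1 / α) ∧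
    ((1 - α) * (2 / (1 - α)) - 1) / ((1 + α * (2 / (1 - α))) * (2 / (1 - α) - 1))
      = ((1 - α) / (1 + α)) ^ 2 ∧
    ∀ θ ∈ Set.Icc (1 / (1 - 2 * α)) (1 / α),
      ((1 - α) * θ - 1) / ((1 + α * θ) * (θ - 1)) ≤ ((1 - α) / (1 + α)) ^ 2 := by
  have h2 : (0:ℝ) < 1 - 2 * α := by linarith
  have h3 : (0:ℝ) < 1 - α := by linarith
  have h4 : (0:ℝ) < 1 + α := by linarith
  refine ⟨⟨?_, ?_⟩, ?_, ?_⟩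
  · rw [div_le_div_iff₀ h2 h3]; linarith
  · rw [div_le_div_iff₀ h3 h0]; linarith
  · have hv : (0:ℝ) < 2 / (1 - α) - 1 := by
      rw [sub_pos, lt_div_iff₀ h3]; linarith
    have hu : (0:ℝ) < 1 + α * (2 / (1 - α)) := by positivity
    rw [div_pow, div_eq_div_iff (mul_pos hu hv).ne' (pow_pos h4 2).ne']
    field_simp
    ring
  · intro θ ⟨hθ1, hθ2⟩
    have hθ : 1 < θ := by
      have : 1 < 1 / (1 - 2 * α) := by
        rw [lt_div_iff₀ h2]; linarith
      linarith
    have hd : 0 < (1 + α * θ) * (θ - 1) := mul_pos (by nlinarith) (by linarith)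
    rw [div_pow, div_le_div_iff₀ hd (pow_pos h4 2)]
    nlinarith [sq_nonneg ((1 - α) * θ - 2), sq_nonneg (1 + α), mul_pos h0 (sub_pos.2 hθ)]
end

section
/- The piecewise function D(α) from the dimension formula is differentiable at α = 2 - √3 but its second derivative does not exist there, and D is not differentiable at α = 3 - 2√2. -/
open Real

/-- The piecewise dimension formula for the uniform recurrence set. -/
noncomputable def dimFormula (α : ℝ) : ℝ :=
  if α ≤ 3 - 2 * Real.sqrt 2 then 2 * (1 - α) ^ 2 / (1 + α) ^ 2
  else if α ≤ 2 - Real.sqrt 3 then (1 - Real.sqrt (2 * α)) ^ 2 / α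
  else if α ≤ 1 / 3 then (1 - 3 * α) / (1 - α)
  else 0

/-!
Near each breakpoint `a`, `dimFormula` agrees with `fun x => if x ≤ a then g x else h x` for two
pieces `g`, `h` that are smooth at `a` and agree there. Such a function is differentiable at `a`
exactly when `g' a = h' a`, and then its derivative near `a` is the same kind of two-piece
function, built from `g'` and `h'`. At `2 - √3` the middle and right pieces share the slope
`-(2 + √3)`, but the middle piece is convex there and the right one concave, so the second
derivatives cannot match. At `3 - 2√2` the slopes of the left and middle pieces already differ:
`-(4 + 3√2) / 2` against `-(7 + 5√2)`.
-/

open Set Filter Topology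

section Piecewise

variable {g h : ℝ → ℝ} {a : ℝ}

lemma hasDerivWithinAt_Iic_ite_le {d : ℝ} (hg : HasDerivAt g d a) :
    HasDerivWithinAt (fun x => if x ≤ a then g x else h x) d (Iic a) a :=
  hg.hasDerivWithinAt.congr (fun _ hx => if_pos hx) (if_pos le_rfl)

lemma hasDerivWithinAt_Ici_ite_le {d : ℝ} (hh : HasDerivAt h d a) (hgh : g a = h a) :
    HasDerivWithinAt (fun x => if x ≤ a then g x else h x) d (Ici a) a := by
  refine hh.hasDerivWithinAt.congr (fun x hx => ?_) (by simp [hgh])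
  rcases (mem_Ici.1 hx).eq_or_lt with rfl | hlt
  · simp [hgh]
  · simp [not_le.2 hlt]

lemma hasDerivAt_ite_le {d : ℝ} (hg : HasDerivAt g d a) (hh : HasDerivAt h d a)
    (hgh : g a = h a) : HasDerivAt (fun x => if x ≤ a then g x else h x) d a := by
  simpa [Iic_union_Ici] using
    (hasDerivWithinAt_Iic_ite_le hg).union (hasDerivWithinAt_Ici_ite_le hh hgh)

lemma not_differentiableAt_ite_le {d₁ d₂ : ℝ} (hg : HasDerivAt g d₁ a)
    (hh : HasDerivAt h d₂ a) (hgh : g a = h a) (hd : d₁ ≠ d₂) :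
    ¬ DifferentiableAt ℝ (fun x => if x ≤ a then g x else h x) a := by
  intro hf
  have h₁ := (uniqueDiffWithinAt_Iic a).eq_deriv _ (hasDerivWithinAt_Iic_ite_le hg)
    hf.hasDerivAt.hasDerivWithinAt
  have h₂ := (uniqueDiffWithinAt_Ici a).eq_deriv _ (hasDerivWithinAt_Ici_ite_le hh hgh)
    hf.hasDerivAt.hasDerivWithinAt
  exact hd (h₁.trans h₂.symm)

lemma deriv_ite_le_eventuallyEq {g' h' : ℝ → ℝ}
    (hg : ∀ᶠ x in 𝓝 a, HasDerivAt g (g' x) x)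
    (hh : ∀ᶠ x in 𝓝 a, HasDerivAt h (h' x) x)
    (hgh : g a = h a) (hgh' : g' a = h' a) :
    deriv (fun x => if x ≤ a then g x else h x) =ᶠ[𝓝 a]
      fun x => if x ≤ a then g' x else h' x := by
  filter_upwards [hg, hh] with x hgx hhx
  rcases lt_trichotomy x a with hlt | rfl | hgt
  · have hfg : (fun y => if y ≤ a then g y else h y) =ᶠ[𝓝 x] g := by
      filter_upwards [Iic_mem_nhds hlt] with y hy using if_pos hy
    rw [hfg.deriv_eq, hgx.deriv, if_pos hlt.le]
  · rw [(hasDerivAt_ite_le hgx (hgh' ▸ hhx) hgh).deriv, if_pos le_rfl]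
  · have hfh : (fun y => if y ≤ a then g y else h y) =ᶠ[𝓝 x] h := by
      filter_upwards [Ioi_mem_nhds hgt] with y hy using if_neg (not_le.2 hy)
    rw [hfh.deriv_eq, hhx.deriv, if_neg (not_le.2 hgt)]

end Piecewise

lemma hasDerivAt_sqrt_two_mul {α : ℝ} (hα : 0 < α) :
    HasDerivAt (fun x => √(2 * x)) (√(2 * α))⁻¹ α := by
  refine (((hasDerivAt_id' α).const_mul 2).sqrt (by positivity)).congr_deriv ?_
  field_simp

namespace DimFormula

noncomputable def left (α : ℝ) : ℝ := 2 * (1 - α) ^ 2 / (1 + α) ^ 2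
noncomputable def mid (α : ℝ) : ℝ := (1 - √(2 * α)) ^ 2 / α
noncomputable def right (α : ℝ) : ℝ := (1 - 3 * α) / (1 - α)

noncomputable def leftDeriv (α : ℝ) : ℝ := -8 * (1 - α) / (1 + α) ^ 3
noncomputable def midDeriv (α : ℝ) : ℝ := (√(2 * α) - 1) / α ^ 2
noncomputable def rightDeriv (α : ℝ) : ℝ := -2 / (1 - α) ^ 2

noncomputable def midSecondDeriv (α : ℝ) : ℝ := (4 - 3 * √(2 * α)) / (2 * α ^ 3)
noncomputable def rightSecondDeriv (α : ℝ) : ℝ := -4 / (1 - α) ^ 3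

lemma hasDerivAt_left {α : ℝ} (hα : α ≠ -1) : HasDerivAt left (leftDeriv α) α := by
  have hα' : 1 + α ≠ 0 := fun h => hα (by linarith)
  have hnum := (((hasDerivAt_id' α).const_sub 1).pow 2).const_mul 2
  have hden := ((hasDerivAt_id' α).const_add 1).pow 2
  refine (hnum.div hden (pow_ne_zero 2 hα')).congr_deriv ?_
  simp only [leftDeriv, Pi.pow_apply]
  field_simp
  ring

lemma hasDerivAt_mid {α : ℝ} (hα : 0 < α) : HasDerivAt mid (midDeriv α) α := by
  have hs : √(2 * α) ^ 2 = 2 * α := sq_sqrt (by positivity)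
  refine ((((hasDerivAt_sqrt_two_mul hα).const_sub 1).pow 2).div (hasDerivAt_id' α)
    hα.ne').congr_deriv ?_
  simp only [midDeriv, Pi.pow_apply]
  field_simp
  linear_combination (1 - √(2 * α)) * hs

lemma hasDerivAt_right {α : ℝ} (hα : α ≠ 1) : HasDerivAt right (rightDeriv α) α := by
  have hα' : 1 - α ≠ 0 := sub_ne_zero.2 hα.symm
  refine ((((hasDerivAt_id' α).const_mul 3).const_sub 1).div ((hasDerivAt_id' α).const_sub 1)
    hα').congr_deriv ?_
  simp only [rightDeriv]
  field_simp
  ring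

lemma hasDerivAt_midDeriv {α : ℝ} (hα : 0 < α) :
    HasDerivAt midDeriv (midSecondDeriv α) α := by
  have hs : √(2 * α) ^ 2 = 2 * α := sq_sqrt (by positivity)
  refine (((hasDerivAt_sqrt_two_mul hα).sub_const 1).div (hasDerivAt_pow 2 α)
    (pow_ne_zero 2 hα.ne')).congr_deriv ?_
  simp only [midSecondDeriv]
  field_simp
  linear_combination (-α) * hs

lemma hasDerivAt_rightDeriv {α : ℝ} (hα : α ≠ 1) :
    HasDerivAt rightDeriv (rightSecondDeriv α) α := by
  have hα' : 1 - α ≠ 0 := sub_ne_zero.2 hα.symm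
  refine ((hasDerivAt_const α (-2 : ℝ)).div (((hasDerivAt_id' α).const_sub 1).pow 2)
    (pow_ne_zero 2 hα')).congr_deriv ?_
  simp only [rightSecondDeriv, Pi.pow_apply]
  field_simp
  ring

lemma midSecondDeriv_pos {α : ℝ} (hα : 0 < α) (hα' : α < 8 / 9) : 0 < midSecondDeriv α := by
  have : √(2 * α) < 4 / 3 := (sqrt_lt' (by norm_num)).2 (by linarith)
  exact div_pos (by linarith) (by positivity)

lemma rightSecondDeriv_neg {α : ℝ} (hα : α < 1) : rightSecondDeriv α < 0 :=
  div_neg_of_neg_of_pos (by norm_num) (pow_pos (by linarith) 3)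

lemma three_sub_two_mul_sqrt_two_pos : 0 < 3 - 2 * √2 := by
  linarith [sqrt_two_lt_three_halves]

lemma three_sub_two_mul_sqrt_two_lt_two_sub_sqrt_three : 3 - 2 * √2 < 2 - √3 := by
  have h2 : √2 ^ 2 = 2 := sq_sqrt zero_le_two
  have h3 : √3 ^ 2 = 3 := sq_sqrt zero_le_three
  have h3lt : √3 < 2 := by nlinarith [sqrt_nonneg 3]
  nlinarith [show 0 < 2 * √2 + 1 + √3 by positivity]

lemma two_sub_sqrt_three_lt_one_third : 2 - √3 < 1 / 3 := by
  nlinarith [sq_sqrt (zero_le_three : (0 : ℝ) ≤ 3), sqrt_nonneg 3]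

lemma two_sub_sqrt_three_pos : 0 < 2 - √3 :=
  three_sub_two_mul_sqrt_two_pos.trans three_sub_two_mul_sqrt_two_lt_two_sub_sqrt_three

lemma two_sub_sqrt_three_lt_one : 2 - √3 < 1 :=
  two_sub_sqrt_three_lt_one_third.trans (by norm_num)

lemma sqrt_two_mul_three_sub_two_mul_sqrt_two : √(2 * (3 - 2 * √2)) = 2 - √2 := by
  have h2 : √2 ^ 2 = 2 := sq_sqrt zero_le_two
  rw [show 2 * (3 - 2 * √2) = (2 - √2) ^ 2 by linear_combination -h2]
  exact sqrt_sq (by linarith [sqrt_two_lt_three_halves])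

lemma sqrt_two_mul_two_sub_sqrt_three : √(2 * (2 - √3)) = √3 - 1 := by
  have h3 : √3 ^ 2 = 3 := sq_sqrt zero_le_three
  rw [show 2 * (2 - √3) = (√3 - 1) ^ 2 by linear_combination -h3]
  exact sqrt_sq (by linarith [two_sub_sqrt_three_lt_one])

lemma left_three_sub_two_mul_sqrt_two : left (3 - 2 * √2) = 1 := by
  have h2 : √2 ^ 2 = 2 := sq_sqrt zero_le_two
  have : 1 + (3 - 2 * √2) ≠ 0 := by linarith [three_sub_two_mul_sqrt_two_pos]
  rw [left]
  field_simp
  grind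

lemma mid_three_sub_two_mul_sqrt_two : mid (3 - 2 * √2) = 1 := by
  have h2 : √2 ^ 2 = 2 := sq_sqrt zero_le_two
  have := three_sub_two_mul_sqrt_two_pos.ne'
  rw [mid, sqrt_two_mul_three_sub_two_mul_sqrt_two]
  field_simp
  linear_combination h2

lemma leftDeriv_three_sub_two_mul_sqrt_two : leftDeriv (3 - 2 * √2) = -(4 + 3 * √2) / 2 := by
  have h2 : √2 ^ 2 = 2 := sq_sqrt zero_le_two
  have : 1 + (3 - 2 * √2) ≠ 0 := by linarith [three_sub_two_mul_sqrt_two_pos]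
  rw [leftDeriv]
  field_simp
  grind

lemma midDeriv_three_sub_two_mul_sqrt_two : midDeriv (3 - 2 * √2) = -(7 + 5 * √2) := by
  have h2 : √2 ^ 2 = 2 := sq_sqrt zero_le_two
  have := three_sub_two_mul_sqrt_two_pos.ne'
  rw [midDeriv, sqrt_two_mul_three_sub_two_mul_sqrt_two]
  field_simp
  grind

lemma mid_two_sub_sqrt_three : mid (2 - √3) = 2 - √3 := by
  have := two_sub_sqrt_three_pos.ne'
  rw [mid, sqrt_two_mul_two_sub_sqrt_three]
  field_simp
  ring

lemma right_two_sub_sqrt_three : right (2 - √3) = 2 - √3 := by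
  have h3 : √3 ^ 2 = 3 := sq_sqrt zero_le_three
  have : 1 - (2 - √3) ≠ 0 := by linarith [two_sub_sqrt_three_lt_one]
  rw [right]
  field_simp
  grind

lemma midDeriv_two_sub_sqrt_three : midDeriv (2 - √3) = -(2 + √3) := by
  have h3 : √3 ^ 2 = 3 := sq_sqrt zero_le_three
  have := two_sub_sqrt_three_pos.ne'
  rw [midDeriv, sqrt_two_mul_two_sub_sqrt_three]
  field_simp
  grind

lemma rightDeriv_two_sub_sqrt_three : rightDeriv (2 - √3) = -(2 + √3) := by
  have h3 : √3 ^ 2 = 3 := sq_sqrt zero_le_three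
  have : 1 - (2 - √3) ≠ 0 := by linarith [two_sub_sqrt_three_lt_one]
  rw [rightDeriv]
  field_simp
  grind

lemma mid_eq_right_two_sub_sqrt_three : mid (2 - √3) = right (2 - √3) := by
  rw [mid_two_sub_sqrt_three, right_two_sub_sqrt_three]

lemma midDeriv_eq_rightDeriv_two_sub_sqrt_three : midDeriv (2 - √3) = rightDeriv (2 - √3) := by
  rw [midDeriv_two_sub_sqrt_three, rightDeriv_two_sub_sqrt_three]

end DimFormula

open DimFormula

lemma dimFormula_eventuallyEq_left_mid :
    dimFormula =ᶠ[𝓝 (3 - 2 * √2)] fun x => if x ≤ 3 - 2 * √2 then left x else mid x := by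
  filter_upwards [Iic_mem_nhds three_sub_two_mul_sqrt_two_lt_two_sub_sqrt_three] with x hx
  simp only [dimFormula, left, mid, if_pos (mem_Iic.1 hx)]

lemma dimFormula_eventuallyEq_mid_right :
    dimFormula =ᶠ[𝓝 (2 - √3)] fun x => if x ≤ 2 - √3 then mid x else right x := by
  filter_upwards [Ioo_mem_nhds three_sub_two_mul_sqrt_two_lt_two_sub_sqrt_three
    two_sub_sqrt_three_lt_one_third] with x hx
  simp only [dimFormula, mid, right, if_neg (not_le.2 hx.1), if_pos hx.2.le]

lemma hasDerivAt_dimFormula_two_sub_sqrt_three :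
    HasDerivAt dimFormula (midDeriv (2 - √3)) (2 - √3) := by
  refine (hasDerivAt_ite_le (hasDerivAt_mid two_sub_sqrt_three_pos) ?_
    mid_eq_right_two_sub_sqrt_three).congr_of_eventuallyEq dimFormula_eventuallyEq_mid_right
  exact midDeriv_eq_rightDeriv_two_sub_sqrt_three ▸ hasDerivAt_right two_sub_sqrt_three_lt_one.ne

lemma deriv_dimFormula_eventuallyEq :
    deriv dimFormula =ᶠ[𝓝 (2 - √3)]
      fun x => if x ≤ 2 - √3 then midDeriv x else rightDeriv x :=
  dimFormula_eventuallyEq_mid_right.deriv.trans <| deriv_ite_le_eventuallyEq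
    ((eventually_gt_nhds two_sub_sqrt_three_pos).mono fun _ => hasDerivAt_mid)
    ((eventually_ne_nhds two_sub_sqrt_three_lt_one.ne).mono fun _ => hasDerivAt_right)
    mid_eq_right_two_sub_sqrt_three midDeriv_eq_rightDeriv_two_sub_sqrt_three

lemma not_differentiableAt_deriv_dimFormula_two_sub_sqrt_three :
    ¬ DifferentiableAt ℝ (deriv dimFormula) (2 - √3) := by
  have hB := two_sub_sqrt_three_pos
  have hB1 := two_sub_sqrt_three_lt_one
  have hB89 : 2 - √3 < 8 / 9 := two_sub_sqrt_three_lt_one_third.trans (by norm_num)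
  rw [deriv_dimFormula_eventuallyEq.differentiableAt_iff]
  exact not_differentiableAt_ite_le (hasDerivAt_midDeriv hB) (hasDerivAt_rightDeriv hB1.ne)
    midDeriv_eq_rightDeriv_two_sub_sqrt_three
    ((rightSecondDeriv_neg hB1).trans (midSecondDeriv_pos hB hB89)).ne'

lemma not_differentiableAt_dimFormula_three_sub_two_mul_sqrt_two :
    ¬ DifferentiableAt ℝ dimFormula (3 - 2 * √2) := by
  have hA := three_sub_two_mul_sqrt_two_pos
  rw [dimFormula_eventuallyEq_left_mid.differentiableAt_iff]
  refine not_differentiableAt_ite_le (hasDerivAt_left (by linarith)) (hasDerivAt_mid hA)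
    (by rw [left_three_sub_two_mul_sqrt_two, mid_three_sub_two_mul_sqrt_two]) ?_
  rw [leftDeriv_three_sub_two_mul_sqrt_two, midDeriv_three_sub_two_mul_sqrt_two]
  nlinarith [sqrt_nonneg 2]

/-- The dimension formula is differentiable at `α = 2-√3` but its second
derivative does not exist there, and it is not differentiable at `α = 3-2√2`. -/
theorem stmt_11 :
    DifferentiableAt ℝ dimFormula (2 - Real.sqrt 3) ∧
    ¬ DifferentiableAt ℝ (deriv dimFormula) (2 - Real.sqrt 3) ∧
    ¬ DifferentiableAt ℝ dimFormula (3 - 2 * Real.sqrt 2) :=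
  ⟨hasDerivAt_dimFormula_two_sub_sqrt_three.differentiableAt,
    not_differentiableAt_deriv_dimFormula_two_sub_sqrt_three,
    not_differentiableAt_dimFormula_three_sub_two_mul_sqrt_two⟩
end

section
/- Let σ be the shift on a two-sided subshift Σ_Γ with the metric d(x,y) = λ^{-k(x,y)} as above, λ > 1. If x ∈ Σ_Γ satisfies d(σ^n x, x) < λ^{-αN} and d(σ^m x, x) < λ^{-αM} with 0 < n < m, n - αN < m - αM, n + αN < m + αM and m - αM < n + αN (overlapping fixed blocks), then x_{-αM + ℓ} = x_{m - n - αM + ℓ} for all integers ℓ ∈ [0, n + αN - m + αM]; i.e. a fixed block of left coordinates of x arises from the overlap. -/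
/-- Overlapping fixed blocks produce a fixed block of left coordinates.
Here `a = αN` and `b = αM` are the integer half-lengths of the two fixed
blocks: the condition `d(σⁿx, x) < λ^{-αN}` is equivalent to
`x_{n+k} = x_k` for all `|k| ≤ αN`. If the two fixed blocks (around `n` and
`m`) overlap, i.e. `0 < n < m`, `n - a < m - b`, `n + a < m + b` and
`m - b < n + a`, then `x_{-b+ℓ} = x_{m-n-b+ℓ}` for all integers
`ℓ ∈ [0, n + a - m + b]`. -/
theorem stmt_16 {A : Type*} (x : ℤ → A) (n m a b : ℤ)
    (ha : 0 ≤ a) (hb : 0 ≤ b)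
    (hn : 0 < n) (hnm : n < m)
    (hleft : n - a < m - b) (hright : n + a < m + b) (hoverlap : m - b < n + a)
    (hfix1 : ∀ k : ℤ, |k| ≤ a → x (n + k) = x k)
    (hfix2 : ∀ k : ℤ, |k| ≤ b → x (m + k) = x k) :
    ∀ ℓ : ℤ, 0 ≤ ℓ → ℓ ≤ n + a - m + b → x (-b + ℓ) = x (m - n - b + ℓ) := by
  intro ℓ h0 h1
  have h2 := hfix2 (-b + ℓ) (by rw [abs_le]; constructor <;> linarith)
  have h3 := hfix1 (m - n - b + ℓ) (by rw [abs_le]; constructor <;> linarith)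
  rw [← h2]
  have he : m + (-b + ℓ) = n + (m - n - b + ℓ) := by ring
  rw [he, h3]
end
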